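/- The group B_2(C_5) is free abelian of rank 2, freely generated by β_1 = [1,1] and β_2 = [1,2]; moreover [1,4] = [2,3] = 0, [1,3] = β_1 - β_2, [2,2] = 2β_2 - β_1, [2,4] = β_2 - β_1, [3,3] = β_1 - 2β_2, [3,4] = -β_2, and [4,4] = -β_1. -/

import Mathlib

open FreeAbelianGroup

/-- A multiset of characters generates the character group. -/
def Adm {A : Type} [AddCommGroup A] (s : Multiset A) : Prop :=
  AddSubgroup.closure {x | x ∈ s} = ⊤

/-- Admissible symbols: multisets of `n` characters generating `A`. -/
def Symb (A : Type) [AddCommGroup A] (n : ℕ) : Type :=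
  {s : Multiset A // Multiset.card s = n ∧ Adm s}

/-- The blow-up relations (B₂). -/
def blowupRels (A : Type) [AddCommGroup A] (n : ℕ) :
    Set (FreeAbelianGroup (Symb A n)) :=
  {x | ∃ (a b : A) (t : Multiset A)
      (h : Multiset.card (a ::ₘ b ::ₘ t) = n ∧ Adm (a ::ₘ b ::ₘ t))
      (h1 : Multiset.card (a ::ₘ (b - a) ::ₘ t) = n ∧ Adm (a ::ₘ (b - a) ::ₘ t))
      (h2 : Multiset.card ((a - b) ::ₘ b ::ₘ t) = n ∧ Adm ((a - b) ::ₘ b ::ₘ t)),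
      a ≠ b ∧
      x = of (⟨a ::ₘ b ::ₘ t, h⟩ : Symb A n) - of ⟨a ::ₘ (b - a) ::ₘ t, h1⟩
            - of ⟨(a - b) ::ₘ b ::ₘ t, h2⟩} ∪
  {x | ∃ (a : A) (t : Multiset A)
      (h : Multiset.card (a ::ₘ a ::ₘ t) = n ∧ Adm (a ::ₘ a ::ₘ t))
      (h0 : Multiset.card ((0 : A) ::ₘ a ::ₘ t) = n ∧ Adm ((0 : A) ::ₘ a ::ₘ t)),
      x = of (⟨a ::ₘ a ::ₘ t, h⟩ : Symb A n) - of ⟨(0 : A) ::ₘ a ::ₘ t, h0⟩}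

/-- The group of equivariant birational types `𝓑ₙ(G)`, for `A = G^∨`. -/
def B (A : Type) [AddCommGroup A] (n : ℕ) : Type :=
  FreeAbelianGroup (Symb A n) ⧸ AddSubgroup.closure (blowupRels A n)

instance (A : Type) [AddCommGroup A] (n : ℕ) : AddCommGroup (B A n) := by
  unfold B; infer_instance

/-- The class of a symbol in `𝓑ₙ(G)`. -/
def symb {A : Type} [AddCommGroup A] {n : ℕ} (s : Multiset A)
    (h : Multiset.card s = n ∧ Adm s) : B A n :=
  QuotientAddGroup.mk (of (⟨s, h⟩ : Symb A n))

lemma adm_of_unit {N : ℕ} [NeZero N] {s : Multiset (ZMod N)} {u : ZMod N}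
    (hu : u ∈ s) (h : IsUnit u) : Adm s := by
  rw [Adm, AddSubgroup.eq_top_iff']
  intro x
  have hu' : u ∈ AddSubgroup.closure {y | y ∈ s} := AddSubgroup.subset_closure hu
  obtain ⟨v, hv⟩ := h.exists_left_inv
  have hx : x = (x * v).val • u := by
    rw [nsmul_eq_mul, ZMod.natCast_val, ZMod.cast_id, mul_assoc, hv, mul_one]
  rw [hx]
  exact AddSubgroup.nsmul_mem _ hu' _

lemma admU {N : ℕ} [NeZero N] {s : Multiset (ZMod N)} {u v : ZMod N}
    (hu : u ∈ s) (huv : u * v = 1) : Adm s :=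
  adm_of_unit hu ⟨⟨u, v, huv, by rw [mul_comm]; exact huv⟩, rfl⟩

/-- The symbol `[a,b]` in `B₂(C₅)` (every nonzero element of `ℤ/5` is a unit). -/
def c5 (a b : ZMod 5) (u v : ZMod 5) (hu : u ∈ ({a, b} : Multiset (ZMod 5)))
    (huv : u * v = 1) : B (ZMod 5) 2 :=
  symb {a, b} ⟨by simp, admU hu huv⟩

def β₁ : B (ZMod 5) 2 := c5 1 1 1 1 (by decide) (by decide)
def β₂ : B (ZMod 5) 2 := c5 1 2 1 1 (by decide) (by decide)

/-!
Solving the blow-up relations one at a time expresses every symbol `[a, b]` as an integral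
combination of `β₁ = [1, 1]` and `β₂ = [1, 2]`. Conversely, the table of coefficients so obtained
satisfies the defining relations of `B₂` (a finite check), hence descends to a homomorphism
`B₂(C₅) → ℤ²` sending `β₁, β₂` to the standard basis, and the two maps are mutually inverse.
The listed identities are then read off from the table.
-/

namespace B

variable {A : Type} [AddCommGroup A] {n : ℕ}

theorem symb_congr {s t : Multiset A} (hst : s = t) (hs : Multiset.card s = n ∧ Adm s)
    (ht : Multiset.card t = n ∧ Adm t) : symb s hs = symb t ht := by
  subst hst; rfl

theorem symb_cons_cons_eq_add {a b : A} {t : Multiset A} (hab : a ≠ b)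
    (h : Multiset.card (a ::ₘ b ::ₘ t) = n ∧ Adm (a ::ₘ b ::ₘ t))
    (h₁ : Multiset.card (a ::ₘ (b - a) ::ₘ t) = n ∧ Adm (a ::ₘ (b - a) ::ₘ t))
    (h₂ : Multiset.card ((a - b) ::ₘ b ::ₘ t) = n ∧ Adm ((a - b) ::ₘ b ::ₘ t)) :
    symb (a ::ₘ b ::ₘ t) h = symb (a ::ₘ (b - a) ::ₘ t) h₁ + symb ((a - b) ::ₘ b ::ₘ t) h₂ := by
  rw [← sub_eq_zero, ← sub_sub]
  exact (QuotientAddGroup.eq_zero_iff _).mpr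
    (AddSubgroup.subset_closure (Or.inl ⟨a, b, t, h, h₁, h₂, hab, rfl⟩))

theorem symb_cons_self {a : A} {t : Multiset A}
    (h : Multiset.card (a ::ₘ a ::ₘ t) = n ∧ Adm (a ::ₘ a ::ₘ t))
    (h₀ : Multiset.card ((0 : A) ::ₘ a ::ₘ t) = n ∧ Adm ((0 : A) ::ₘ a ::ₘ t)) :
    symb (a ::ₘ a ::ₘ t) h = symb ((0 : A) ::ₘ a ::ₘ t) h₀ := by
  rw [← sub_eq_zero]
  exact (QuotientAddGroup.eq_zero_iff _).mpr
    (AddSubgroup.subset_closure (Or.inr ⟨a, t, h, h₀, rfl⟩))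

variable {M : Type*} [AddCommGroup M]

theorem hom_ext {f g : B A n →+ M} (h : ∀ s hs, f (symb s hs) = g (symb s hs)) : f = g :=
  QuotientAddGroup.addMonoidHom_ext _ (FreeAbelianGroup.lift_ext _ _ fun s => h s.1 s.2)

theorem closure_blowupRels_le_ker {F : Symb A n → M}
    (hblowup : ∀ a b t h h₁ h₂, a ≠ b →
      F ⟨a ::ₘ b ::ₘ t, h⟩ = F ⟨a ::ₘ (b - a) ::ₘ t, h₁⟩ + F ⟨(a - b) ::ₘ b ::ₘ t, h₂⟩)
    (hself : ∀ a t h h₀, F ⟨a ::ₘ a ::ₘ t, h⟩ = F ⟨(0 : A) ::ₘ a ::ₘ t, h₀⟩) :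
    AddSubgroup.closure (blowupRels A n) ≤ (FreeAbelianGroup.lift F).ker := by
  rw [AddSubgroup.closure_le]
  rintro x (⟨a, b, t, h, h₁, h₂, hab, rfl⟩ | ⟨a, t, h, h₀, rfl⟩)
  -- `blowupRels` is elaborated over the unfolded subtype, on which `map_sub` does not fire:
  -- compute with generic symbols and instantiate by defeq.
  · have key : ∀ x y z : Symb A n, F x = F y + F z →
        FreeAbelianGroup.lift F (of x - of y - of z) = 0 := by
      intro x y z hxyz
      simp [hxyz]
    exact key _ _ _ (hblowup a b t h h₁ h₂ hab)
  · have key : ∀ x y : Symb A n, F x = F y → FreeAbelianGroup.lift F (of x - of y) = 0 := by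
      intro x y hxy
      simp [hxy]
    exact key _ _ (hself a t h h₀)

noncomputable def lift (F : Symb A n → M)
    (hblowup : ∀ a b t h h₁ h₂, a ≠ b →
      F ⟨a ::ₘ b ::ₘ t, h⟩ = F ⟨a ::ₘ (b - a) ::ₘ t, h₁⟩ + F ⟨(a - b) ::ₘ b ::ₘ t, h₂⟩)
    (hself : ∀ a t h h₀, F ⟨a ::ₘ a ::ₘ t, h⟩ = F ⟨(0 : A) ::ₘ a ::ₘ t, h₀⟩) : B A n →+ M :=
  QuotientAddGroup.lift _ (FreeAbelianGroup.lift F) (closure_blowupRels_le_ker hblowup hself)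

theorem lift_symb {F : Symb A n → M} {hblowup hself} (s : Multiset A)
    (h : Multiset.card s = n ∧ Adm s) : lift F hblowup hself (symb s h) = F ⟨s, h⟩ :=
  FreeAbelianGroup.lift_apply_of _ _

end B

section Adm

variable {A : Type} [AddCommGroup A]

theorem AddSubgroup.closure_pair_sub (a b : A) :
    AddSubgroup.closure {a, b - a} = AddSubgroup.closure {a, b} := by
  apply le_antisymm <;> rw [AddSubgroup.closure_le, Set.insert_subset_iff, Set.singleton_subset_iff]
  · exact ⟨AddSubgroup.subset_closure (by simp),
      sub_mem (AddSubgroup.subset_closure (by simp)) (AddSubgroup.subset_closure (by simp))⟩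
  · refine ⟨AddSubgroup.subset_closure (by simp), ?_⟩
    rw [← sub_add_cancel b a]
    exact add_mem (AddSubgroup.subset_closure (by simp)) (AddSubgroup.subset_closure (by simp))

theorem adm_pair_iff {a b : A} :
    Adm ({a, b} : Multiset A) ↔ AddSubgroup.closure {a, b} = ⊤ := by
  rw [Adm, show {x | x ∈ ({a, b} : Multiset A)} = {a, b} by ext; simp]

theorem ne_zero_or_ne_zero_of_adm_pair [Nontrivial A] {a b : A} (h : Adm ({a, b} : Multiset A)) :
    a ≠ 0 ∨ b ≠ 0 := by
  contrapose! h
  obtain ⟨rfl, rfl⟩ := h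
  rw [adm_pair_iff, Set.pair_eq_singleton, AddSubgroup.closure_singleton_zero]
  exact bot_ne_top

theorem adm_pair_comm {a b : A} : Adm ({a, b} : Multiset A) ↔ Adm ({b, a} : Multiset A) := by
  rw [Multiset.pair_comm]

theorem adm_pair_sub_right {a b : A} :
    Adm ({a, b - a} : Multiset A) ↔ Adm ({a, b} : Multiset A) := by
  rw [adm_pair_iff, adm_pair_iff, AddSubgroup.closure_pair_sub]

theorem adm_pair_sub_left {a b : A} :
    Adm ({a - b, b} : Multiset A) ↔ Adm ({a, b} : Multiset A) := by
  rw [adm_pair_comm, adm_pair_sub_right, adm_pair_comm]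

theorem adm_zero_pair {a : A} : Adm ({0, a} : Multiset A) ↔ Adm ({a, a} : Multiset A) := by
  rw [adm_pair_iff, adm_pair_iff, AddSubgroup.closure_insert_zero, Set.pair_eq_singleton]

end Adm

structure RespectsB2Relations {A M : Type*} [AddCommGroup A] [AddCommGroup M] (f : A → A → M) :
    Prop where
  symm : ∀ a b, f a b = f b a
  self : ∀ a, f a a = f 0 a
  blowup : ∀ a b, a ≠ b → f a b = f a (b - a) + f (a - b) b

namespace RespectsB2Relations

variable {A M N : Type*} [AddCommGroup A] [AddCommGroup M] [AddCommGroup N] {f g : A → A → M}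

theorem blowup_of_eq (hf : RespectsB2Relations f) {a b c d : A} (hab : a ≠ b) (hc : b - a = c)
    (hd : a - b = d) : f a b = f a c + f d b := by
  rw [← hc, ← hd]
  exact hf.blowup a b hab

theorem sub (hf : RespectsB2Relations f) (hg : RespectsB2Relations g) :
    RespectsB2Relations (fun a b => f a b - g a b) where
  symm a b := by rw [hf.symm, hg.symm]
  self a := by rw [hf.self, hg.self]
  blowup a b hab := by rw [hf.blowup a b hab, hg.blowup a b hab]; abel

theorem map (hf : RespectsB2Relations f) (φ : M →+ N) :
    RespectsB2Relations (fun a b => φ (f a b)) where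
  symm a b := by rw [hf.symm]
  self a := by rw [hf.self]
  blowup a b hab := by rw [hf.blowup a b hab, map_add]

end RespectsB2Relations

namespace B

variable {A : Type} [AddCommGroup A] {M : Type*} [AddCommGroup M]

/-- The symbol `[a, b]`, set to `0` when `{a, b}` does not generate `A`; this is compatible with
the relations because `{a, b}`, `{a, b - a}`, `{a - b, b}` generate the same subgroup. -/
noncomputable def pair (a b : A) : B A 2 :=
  open Classical in
  if h : Adm ({a, b} : Multiset A) then symb {a, b} ⟨Multiset.card_pair a b, h⟩ else 0

theorem pair_of_adm {a b : A} (h : Adm ({a, b} : Multiset A)) :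
    pair a b = symb {a, b} ⟨Multiset.card_pair a b, h⟩ :=
  dif_pos h

theorem pair_of_not_adm {a b : A} (h : ¬ Adm ({a, b} : Multiset A)) : pair a b = 0 :=
  dif_neg h

theorem pair_respectsB2Relations : RespectsB2Relations (pair : A → A → B A 2) where
  symm a b := by
    by_cases h : Adm ({a, b} : Multiset A)
    · rw [pair_of_adm h, pair_of_adm (adm_pair_comm.mp h)]
      exact symb_congr (Multiset.pair_comm a b) _ _
    · rw [pair_of_not_adm h, pair_of_not_adm (mt adm_pair_comm.mpr h)]
  self a := by
    by_cases h : Adm ({a, a} : Multiset A)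
    · rw [pair_of_adm h, pair_of_adm (adm_zero_pair.mpr h)]
      exact symb_cons_self (t := 0) _ _
    · rw [pair_of_not_adm h, pair_of_not_adm (mt adm_zero_pair.mp h)]
  blowup a b hab := by
    by_cases h : Adm ({a, b} : Multiset A)
    · rw [pair_of_adm h, pair_of_adm (adm_pair_sub_right.mpr h),
        pair_of_adm (adm_pair_sub_left.mpr h)]
      exact symb_cons_cons_eq_add (t := 0) hab _ _ _
    · rw [pair_of_not_adm h, pair_of_not_adm (mt adm_pair_sub_right.mp h),
        pair_of_not_adm (mt adm_pair_sub_left.mp h), add_zero]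

theorem hom_ext_pair {f g : B A 2 →+ M}
    (h : ∀ a b, Adm ({a, b} : Multiset A) → f (pair a b) = g (pair a b)) : f = g := by
  refine hom_ext fun s hs => ?_
  obtain ⟨a, b, rfl⟩ := Multiset.card_eq_two.mp hs.1
  simpa only [pair_of_adm hs.2] using h a b hs.2

private def symbValue (f : A → A → M) (hf : RespectsB2Relations f) (s : Symb A 2) : M :=
  Sym2.lift ⟨f, hf.symm⟩ ((Sym2.equivMultiset A).symm ⟨s.1, s.2.1⟩)

noncomputable def liftPair (f : A → A → M) (hf : RespectsB2Relations f) : B A 2 →+ M :=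
  lift (symbValue f hf)
    (fun a b t h _ _ hab => by
      obtain rfl : t = 0 := by simpa using h.1
      exact hf.blowup a b hab)
    (fun a t h _ => by
      obtain rfl : t = 0 := by simpa using h.1
      exact hf.self a)

theorem liftPair_pair {f : A → A → M} (hf : RespectsB2Relations f) {a b : A}
    (h : Adm ({a, b} : Multiset A)) : liftPair f hf (pair a b) = f a b := by
  rw [pair_of_adm h]
  exact lift_symb ..

end B

namespace C5

/-- `coords a b` are the coordinates of `[a, b]` in the basis `β₁ = [1, 1]`, `β₂ = [1, 2]`. -/
def coords : ZMod 5 → ZMod 5 → ℤ × ℤ :=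
  ![![(0, 0), (1, 0), (-1, 2), (1, -2), (-1, 0)],
    ![(1, 0), (1, 0), (0, 1), (1, -1), (0, 0)],
    ![(-1, 2), (0, 1), (-1, 2), (0, 0), (-1, 1)],
    ![(1, -2), (1, -1), (0, 0), (1, -2), (0, -1)],
    ![(-1, 0), (0, 0), (-1, 1), (0, -1), (-1, 0)]]

theorem coords_respectsB2Relations : RespectsB2Relations coords :=
  ⟨by decide, by decide, by decide⟩

theorem eq_zero_of_respectsB2Relations {M : Type*} [AddCommGroup M] {δ : ZMod 5 → ZMod 5 → M}
    (hδ : RespectsB2Relations δ) (h11 : δ 1 1 = 0) (h12 : δ 1 2 = 0) {a b : ZMod 5}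
    (hab : a ≠ 0 ∨ b ≠ 0) : δ a b = 0 := by
  -- each step solves one blow-up relation for its only term not yet known to vanish
  have h01 : δ 0 1 = 0 := hδ.self 1 ▸ h11
  have h41 : δ 4 1 = 0 := by
    simpa [h01] using (hδ.blowup_of_eq (by decide) (by decide) (by decide) :
      δ 0 1 = δ 0 1 + δ 4 1).symm
  have h32 : δ 3 2 = 0 := by
    simpa using (hδ.blowup_of_eq (by decide) (by decide) (by decide) :
      δ 0 2 = δ 0 2 + δ 3 2).symm
  have h42 : δ 4 2 = 0 := by
    simpa [h11, h12] using (hδ.blowup_of_eq (by decide) (by decide) (by decide) :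
      δ 1 2 = δ 1 1 + δ 4 2).symm
  have h43 : δ 4 3 = 0 := by
    simpa [hδ.symm 2 3, hδ.symm 2 1, h32, h12] using
      (hδ.blowup_of_eq (by decide) (by decide) (by decide) : δ 2 3 = δ 2 1 + δ 4 3).symm
  have h22 : δ 2 2 = 0 := by
    simpa [hδ.symm 2 4, hδ.symm 3 4, h42, h43] using
      (hδ.blowup_of_eq (by decide) (by decide) (by decide) : δ 2 4 = δ 2 2 + δ 3 4).symm
  have h13 : δ 1 3 = 0 := by
    simpa [hδ.symm 1 4, hδ.symm 2 4, h41, h42] using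
      (hδ.blowup_of_eq (by decide) (by decide) (by decide) : δ 1 4 = δ 1 3 + δ 2 4).symm
  have h33 : δ 3 3 = 0 := by
    simpa [h12, h13] using (hδ.blowup_of_eq (by decide) (by decide) (by decide) :
      δ 1 3 = δ 1 2 + δ 3 3).symm
  have h44 : δ 4 4 = 0 := by
    simpa [hδ.symm 3 4, hδ.symm 3 1, h43, h13] using
      (hδ.blowup_of_eq (by decide) (by decide) (by decide) : δ 3 4 = δ 3 1 + δ 4 4).symm
  have h02 : δ 0 2 = 0 := hδ.self 2 ▸ h22
  have h03 : δ 0 3 = 0 := hδ.self 3 ▸ h33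
  have h04 : δ 0 4 = 0 := hδ.self 4 ▸ h44
  have cases : ∀ x : ZMod 5, x = 0 ∨ x = 1 ∨ x = 2 ∨ x = 3 ∨ x = 4 := by decide
  rcases cases a with rfl | rfl | rfl | rfl | rfl <;>
    rcases cases b with rfl | rfl | rfl | rfl | rfl <;>
    first | exact absurd hab (by decide) | assumption | (rw [hδ.symm]; assumption)

theorem c5_eq_pair {a b u v : ZMod 5} (hu : u ∈ ({a, b} : Multiset (ZMod 5))) (huv : u * v = 1) :
    c5 a b u v hu huv = B.pair a b :=
  (B.pair_of_adm (admU hu huv)).symm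

noncomputable def toProd : B (ZMod 5) 2 →+ ℤ × ℤ :=
  B.liftPair coords coords_respectsB2Relations

def ofProd : ℤ × ℤ →+ B (ZMod 5) 2 :=
  (zmultiplesHom _ β₁).coprod (zmultiplesHom _ β₂)

theorem toProd_c5 {a b u v : ZMod 5} (hu : u ∈ ({a, b} : Multiset (ZMod 5))) (huv : u * v = 1) :
    toProd (c5 a b u v hu huv) = coords a b := by
  rw [c5_eq_pair]
  exact B.liftPair_pair _ (admU hu huv)

theorem toProd_β₁ : toProd β₁ = (1, 0) :=
  toProd_c5 _ _

theorem toProd_β₂ : toProd β₂ = (0, 1) :=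
  toProd_c5 _ _

theorem ofProd_apply (m n : ℤ) : ofProd (m, n) = m • β₁ + n • β₂ := by
  simp [ofProd]

theorem ofProd_coords {a b : ZMod 5} (h : Adm ({a, b} : Multiset (ZMod 5))) :
    ofProd (coords a b) = B.pair a b := by
  have hδ := B.pair_respectsB2Relations.sub (coords_respectsB2Relations.map ofProd)
  have h11 : B.pair 1 1 - ofProd (coords 1 1) = 0 := by
    rw [← c5_eq_pair (u := 1) (v := 1) (by decide) (by decide)]
    simp [show coords 1 1 = (1, 0) from rfl, ofProd_apply, β₁]
  have h12 : B.pair 1 2 - ofProd (coords 1 2) = 0 := by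
    rw [← c5_eq_pair (u := 1) (v := 1) (by decide) (by decide)]
    simp [show coords 1 2 = (0, 1) from rfl, ofProd_apply, β₂]
  have : Fact (1 < 5) := ⟨by norm_num⟩
  exact (sub_eq_zero.mp (eq_zero_of_respectsB2Relations hδ h11 h12
    (ne_zero_or_ne_zero_of_adm_pair h))).symm

theorem ofProd_comp_toProd : ofProd.comp toProd = .id _ :=
  B.hom_ext_pair fun _ _ h => by simp [toProd, B.liftPair_pair _ h, ofProd_coords h]

theorem toProd_comp_ofProd : toProd.comp ofProd = .id _ :=
  AddMonoidHom.ext fun ⟨m, n⟩ => by simp [ofProd_apply, toProd_β₁, toProd_β₂]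

noncomputable def equiv : B (ZMod 5) 2 ≃+ ℤ × ℤ :=
  toProd.toAddEquiv ofProd ofProd_comp_toProd toProd_comp_ofProd

end C5

/-- `B₂(C₅)` is free abelian of rank 2, freely generated by
`β₁ = [1,1]`, `β₂ = [1,2]`, with the listed expressions for the other symbols. -/
theorem B2_C5_free_rank_two :
    (∃ φ : B (ZMod 5) 2 ≃+ ℤ × ℤ, φ β₁ = (1, 0) ∧ φ β₂ = (0, 1)) ∧
    c5 1 4 1 1 (by decide) (by decide) = 0 ∧
    c5 2 3 2 3 (by decide) (by decide) = 0 ∧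
    c5 1 3 1 1 (by decide) (by decide) = β₁ - β₂ ∧
    c5 2 2 2 3 (by decide) (by decide) = 2 • β₂ - β₁ ∧
    c5 2 4 2 3 (by decide) (by decide) = β₂ - β₁ ∧
    c5 3 3 3 2 (by decide) (by decide) = β₁ - 2 • β₂ ∧
    c5 3 4 3 2 (by decide) (by decide) = -β₂ ∧
    c5 4 4 4 4 (by decide) (by decide) = -β₁ := by
  refine ⟨⟨C5.equiv, C5.toProd_β₁, C5.toProd_β₂⟩, ?_, ?_, ?_, ?_, ?_, ?_, ?_, ?_⟩ <;>
    apply C5.equiv.injective <;>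
    simp only [C5.equiv, AddMonoidHom.toAddEquiv_apply, map_sub, map_neg, map_nsmul, map_zero,
      C5.toProd_c5, C5.toProd_β₁, C5.toProd_β₂] <;>
    decide
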